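/- Let z₁, z₂ > 0 and define F_{z₁,z₂}(r) = arcosh(1 + (r² + (z₁ − z₂)²)/(2·z₁·z₂)). Then for every γ' with 0 < γ' ≤ 1 and every r ≥ 0, F_{z₁,z₂}(γ'·r) ≥ γ'·F_{z₁,z₂}(r). -/
import Mathlib


/-- The inverse hyperbolic cosine. -/
noncomputable def arcosh (x : ℝ) : ℝ := Real.log (x + Real.sqrt (x ^ 2 - 1))

/-- The hyperbolic distance, in the Poincaré half-space model, between two points
with heights `z₁, z₂` whose horizontal coordinates are at Euclidean distance `r`. -/
noncomputable def F (z₁ z₂ r : ℝ) : ℝ :=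
  arcosh (1 + (r ^ 2 + (z₁ - z₂) ^ 2) / (2 * z₁ * z₂))

lemma cosh_arcosh {x : ℝ} (hx : 1 ≤ x) : Real.cosh (arcosh x) = x := by
  have h1 : (0:ℝ) ≤ x ^ 2 - 1 := by nlinarith
  have hs : Real.sqrt (x ^ 2 - 1) ^ 2 = x ^ 2 - 1 := Real.sq_sqrt h1
  have hsn : 0 ≤ Real.sqrt (x ^ 2 - 1) := Real.sqrt_nonneg _
  have ht : 0 < x + Real.sqrt (x ^ 2 - 1) := by nlinarith
  have hinv : (x + Real.sqrt (x ^ 2 - 1))⁻¹ = x - Real.sqrt (x ^ 2 - 1) :=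
    inv_eq_of_mul_eq_one_right (by nlinarith)
  rw [arcosh, Real.cosh_eq, Real.exp_neg, Real.exp_log ht, hinv]
  ring

lemma arcosh_cosh {y : ℝ} (hy : 0 ≤ y) : arcosh (Real.cosh y) = y := by
  have h1 : Real.cosh y ^ 2 - 1 = Real.sinh y ^ 2 := by
    have := Real.cosh_sq y; linarith [Real.cosh_sq y]
  rw [arcosh, h1, Real.sqrt_sq (Real.sinh_nonneg_iff.2 hy), Real.cosh_add_sinh,
    Real.log_exp]

lemma arcosh_le_arcosh {x y : ℝ} (hx : 1 ≤ x) (hxy : x ≤ y) : arcosh x ≤ arcosh y := by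
  have hy : 1 ≤ y := hx.trans hxy
  have h1 : (0:ℝ) ≤ x ^ 2 - 1 := by nlinarith
  have hx0 : 0 < x + Real.sqrt (x ^ 2 - 1) := by positivity
  apply Real.log_le_log hx0
  have : Real.sqrt (x ^ 2 - 1) ≤ Real.sqrt (y ^ 2 - 1) := by
    apply Real.sqrt_le_sqrt; nlinarith
  linarith

lemma convexOn_sinh : ConvexOn ℝ (Set.Ici (0:ℝ)) Real.sinh := by
  apply convexOn_of_hasDerivWithinAt2_nonneg (convex_Ici 0)
    Real.continuous_sinh.continuousOn
    (f' := Real.cosh) (f'' := Real.sinh)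
  · intro x _
    exact (Real.hasDerivAt_sinh x).hasDerivWithinAt
  · intro x _
    exact (Real.hasDerivAt_cosh x).hasDerivWithinAt
  · intro x hx
    rw [interior_Ici] at hx
    exact Real.sinh_nonneg_iff.2 hx.le

lemma sinh_smul_le {γ y : ℝ} (hγ0 : 0 ≤ γ) (hγ1 : γ ≤ 1) (hy : 0 ≤ y) :
    Real.sinh (γ * y) ≤ γ * Real.sinh y := by
  have := convexOn_sinh.2 (Set.self_mem_Ici) (Set.mem_Ici.2 hy)
    (by linarith : (0:ℝ) ≤ 1 - γ) hγ0 (by ring)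
  simpa [Real.sinh_zero] using this

lemma cosh_smul_le {γ y : ℝ} (hγ0 : 0 ≤ γ) (hγ1 : γ ≤ 1) (hy : 0 ≤ y) :
    Real.cosh (γ * y) ≤ 1 + γ ^ 2 * (Real.cosh y - 1) := by
  have key : ∀ t : ℝ, Real.cosh t = 1 + 2 * Real.sinh (t / 2) ^ 2 := by
    intro t
    have h := Real.cosh_two_mul (t / 2)
    have h2 := Real.cosh_sq (t / 2)
    have : (2 : ℝ) * (t / 2) = t := by ring
    rw [this] at h
    linarith
  rw [key, key y]
  have h1 : Real.sinh (γ * y / 2) ≤ γ * Real.sinh (y / 2) := by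
    have := sinh_smul_le hγ0 hγ1 (by linarith : (0:ℝ) ≤ y / 2)
    have e : γ * (y / 2) = γ * y / 2 := by ring
    rwa [e] at this
  have h2 : 0 ≤ Real.sinh (γ * y / 2) := Real.sinh_nonneg_iff.2 (by positivity)
  nlinarith [Real.sinh_nonneg_iff.2 (by linarith : (0:ℝ) ≤ y / 2)]

/-- Lemma 3.3 (2): for `0 < γ' ≤ 1`, `F_{z₁,z₂}(γ'·r) ≥ γ'·F_{z₁,z₂}(r)`. -/
theorem F_scale_le_one (z₁ z₂ : ℝ) (hz₁ : 0 < z₁) (hz₂ : 0 < z₂)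
    (γ' : ℝ) (hγ'0 : 0 < γ') (hγ'1 : γ' ≤ 1) (r : ℝ) (hr : 0 ≤ r) :
    γ' * F z₁ z₂ r ≤ F z₁ z₂ (γ' * r) := by
  set u : ℝ := (r ^ 2 + (z₁ - z₂) ^ 2) / (2 * z₁ * z₂) with hu
  have hu0 : 0 ≤ u := by positivity
  have hF : F z₁ z₂ r = arcosh (1 + u) := rfl
  have hFnn : 0 ≤ F z₁ z₂ r := by
    rw [hF, ← arcosh_cosh (le_refl (0:ℝ)), Real.cosh_zero]
    exact arcosh_le_arcosh le_rfl (by linarith)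
  have hcoshF : Real.cosh (F z₁ z₂ r) = 1 + u := by
    rw [hF]; exact cosh_arcosh (by linarith)
  -- target argument
  set v : ℝ := ((γ' * r) ^ 2 + (z₁ - z₂) ^ 2) / (2 * z₁ * z₂) with hv
  have hv0 : 0 ≤ v := by positivity
  have hG : F z₁ z₂ (γ' * r) = arcosh (1 + v) := rfl
  have hkey : Real.cosh (γ' * F z₁ z₂ r) ≤ 1 + v := by
    have h1 := cosh_smul_le hγ'0.le hγ'1 hFnn
    rw [hcoshF] at h1
    have h2 : γ' ^ 2 * u ≤ v := by
      rw [hu, hv, mul_div_assoc' ]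
      apply div_le_div_of_nonneg_right ?_ (by positivity)
      nlinarith [mul_nonneg (by nlinarith : (0:ℝ) ≤ 1 - γ' ^ 2) (sq_nonneg (z₁ - z₂))]
    linarith
  calc γ' * F z₁ z₂ r = arcosh (Real.cosh (γ' * F z₁ z₂ r)) :=
        (arcosh_cosh (by positivity)).symm
    _ ≤ arcosh (1 + v) := arcosh_le_arcosh (Real.one_le_cosh _) hkey
    _ = F z₁ z₂ (γ' * r) := hG.symm
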